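/- arXiv:1003.5517 — 9 statements merged into one kernel-verified Lean document; each statement's English description precedes it below -/
import Mathlib

section
/- Fix G > 0 and a bandwidth B with 0 < B ≤ G·e^{−2}. The monopolist revenue function p ↦ p·min(B, G·e^{−(1+p)}) on [0, ∞) has the unique maximizer p* = ln(G/B) − 1, and the maximum revenue equals B·(ln(G/B) − 1). -/
open Real

/-- Monopolist with supply `0 < B ≤ G·e^{−2}`: the revenue function
`p ↦ p·min(B, G·e^{−(1+p)})` on `[0,∞)` has unique maximizer `p* = ln(G/B) − 1`,
and the maximum revenue is `B·(ln(G/B) − 1)`. -/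
theorem stmt_1 (G B : ℝ) (hG : 0 < G) (hB : 0 < B) (hBle : B ≤ G * exp (-2)) :
    (∀ p : ℝ, 0 ≤ p → p ≠ log (G / B) - 1 →
      p * min B (G * exp (-(1 + p))) <
        (log (G / B) - 1) * min B (G * exp (-(1 + (log (G / B) - 1))))) ∧
    (log (G / B) - 1) * min B (G * exp (-(1 + (log (G / B) - 1)))) = B * (log (G / B) - 1) := by
  set L := log (G / B) with hLdef
  have hGB : (0:ℝ) < G / B := div_pos hG hB
  have hexpL : exp L = G / B := exp_log hGB
  -- G * exp(-(1+(L-1))) = B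
  have heq : G * exp (-(1 + (L - 1))) = B := by
    have : -(1 + (L - 1)) = -L := by ring
    rw [this, exp_neg, hexpL]
    field_simp
  have hL2 : 2 ≤ L := by
    have h2 : exp 2 ≤ G / B := by
      rw [le_div_iff₀ hB]
      have h := mul_le_mul_of_nonneg_right hBle (exp_pos 2).le
      have h3 : G * exp (-2) * exp 2 = G := by rw [mul_assoc, ← exp_add]; norm_num
      linarith [mul_comm (exp (2:ℝ)) B]
    calc (2:ℝ) = log (exp 2) := (log_exp 2).symm
      _ ≤ L := log_le_log (exp_pos 2) h2
  have hmin : min B (G * exp (-(1 + (L - 1)))) = B := by rw [heq, min_self]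
  rw [hmin]
  constructor
  · intro p hp hne
    rcases lt_or_gt_of_ne hne with hlt | hgt
    · -- p < L - 1 : demand exceeds B
      have hBlt : B < G * exp (-(1 + p)) := by
        have : exp (-L) < exp (-(1 + p)) := by
          apply exp_lt_exp.mpr; linarith
        have hB' : B = G * exp (-L) := by rw [← heq]; ring_nf
        rw [hB']
        exact (mul_lt_mul_iff_right₀ hG).mpr this
      rw [min_eq_left hBlt.le]
      have : p * B < (L - 1) * B := by
        apply mul_lt_mul_of_pos_right hlt hB
      linarith
    · -- p > L - 1 : on the decreasing branch
      have hBge : G * exp (-(1 + p)) < B := by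
        have : exp (-(1 + p)) < exp (-L) := by
          apply exp_lt_exp.mpr; linarith
        have hB' : B = G * exp (-L) := by rw [← heq]; ring_nf
        rw [hB']
        exact (mul_lt_mul_iff_right₀ hG).mpr this
      rw [min_eq_right hBge.le]
      set a := L - 1 with ha
      have ha1 : (1:ℝ) ≤ a := by simp [ha]; linarith
      have hab : a < p := hgt
      -- key: p < a * exp (p - a)
      have hkey : p < a * exp (p - a) := by
        have h1 : 1 + (p - a) < exp (p - a) := by
          have := add_one_lt_exp (x := p - a) (by intro h; apply hne; linarith [sub_eq_zero.mp h])
          linarith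
        nlinarith
      have hrev : p * exp (-(1 + p)) < a * exp (-(1 + a)) := by
        have hpos : 0 < exp (-(1 + p)) := exp_pos _
        have h2 : a * exp (p - a) * exp (-(1 + p)) = a * exp (-(1 + a)) := by
          rw [mul_assoc, ← exp_add]; ring_nf
        calc p * exp (-(1 + p)) < a * exp (p - a) * exp (-(1 + p)) :=
              mul_lt_mul_of_pos_right hkey hpos
          _ = a * exp (-(1 + a)) := h2
      have hBeq : a * B = a * (G * exp (-(1 + a))) := by rw [heq]
      have hApos : 0 < a := lt_of_lt_of_le one_pos ha1
      calc p * (G * exp (-(1 + p))) = (p * exp (-(1 + p))) * G := by ring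
        _ < (a * exp (-(1 + a))) * G := by
            exact mul_lt_mul_of_pos_right hrev hG
        _ = a * (G * exp (-(1 + a))) := by ring
        _ = a * B := by rw [heq]
  · ring
end

section
/- (Proposition 1) Fix G > 0 and bandwidths B_i > 0 and B_j > 0. In the high-SNR pricing game, there is no Nash equilibrium (p_i*, p_j*) with p_i* ≠ p_j*: every pure Nash equilibrium of the pricing game is symmetric. -/
/-- Realized demand of the operator with own bandwidth `Bi` and own price `pi`,
facing a competitor with bandwidth `Bj` and price `pj`, in the high-SNR pricing
game with aggregate user characteristic `G`. -/
noncomputable def realizedDemand (G Bi Bj pi pj : ℝ) : ℝ :=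
  if pi < pj then min Bi (G * Real.exp (-(1 + pi)))
  else if pj < pi then
    (if G * Real.exp (-(1 + pj)) ≤ Bj then 0
     else min Bi ((G - Bj * Real.exp (1 + pj)) * Real.exp (-(1 + pi))))
  else min Bi (G * Real.exp (-(1 + pi)) / 2 + max (G * Real.exp (-(1 + pi)) / 2 - Bj) 0)

/-- `(pi, pj)` is a (pure) Nash equilibrium of the high-SNR pricing game:
each operator's price maximizes its own revenue `p · Q` over `[0,∞)` given the
other's price. -/
def IsPricingNE (G Bi Bj pi pj : ℝ) : Prop :=
  0 ≤ pi ∧ 0 ≤ pj ∧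
  (∀ p : ℝ, 0 ≤ p → p * realizedDemand G Bi Bj p pj ≤ pi * realizedDemand G Bi Bj pi pj) ∧
  (∀ p : ℝ, 0 ≤ p → p * realizedDemand G Bj Bi p pi ≤ pj * realizedDemand G Bj Bi pj pi)

lemma realizedDemand_lt (G Bi Bj p q : ℝ) (h : p < q) :
    realizedDemand G Bi Bj p q = min Bi (G * Real.exp (-(1 + p))) := by
  simp [realizedDemand, h]

lemma no_asym_NE (G Bi Bj : ℝ) (hG : 0 < G) (hBi : 0 < Bi) (hBj : 0 < Bj)
    (pi pj : ℝ) (h : IsPricingNE G Bi Bj pi pj) (hlt : pi < pj) : False := by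
  obtain ⟨hpi, hpj, hi, hj⟩ := h
  by_cases hA : G * Real.exp (-(1 + pi)) ≤ Bi
  · -- j is shut out
    have hjd : realizedDemand G Bj Bi pj pi = 0 := by
      simp only [realizedDemand, if_neg (not_lt.2 hlt.le), if_pos hlt, if_pos hA]
    rcases lt_or_eq_of_le hpi with hpi0 | hpi0
    · -- pi > 0: j undercuts with pi/2
      have h2 : (0:ℝ) ≤ pi / 2 := by linarith
      have := hj (pi / 2) h2
      rw [hjd, realizedDemand_lt G Bj Bi (pi/2) pi (by linarith)] at this
      have hpos : 0 < min Bj (G * Real.exp (-(1 + pi / 2))) :=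
        lt_min hBj (by positivity)
      nlinarith [mul_pos (by linarith : (0:ℝ) < pi/2) hpos]
    · -- pi = 0: i's revenue is 0, deviate to pj/2
      have hpj0 : 0 < pj := by linarith
      have h2 : (0:ℝ) ≤ pj / 2 := by linarith
      have := hi (pj / 2) h2
      rw [realizedDemand_lt G Bi Bj (pj/2) pj (by linarith)] at this
      have hpos : 0 < min Bi (G * Real.exp (-(1 + pj / 2))) :=
        lt_min hBi (by positivity)
      rw [← hpi0, zero_mul] at this
      nlinarith [mul_pos (by linarith : (0:ℝ) < pj/2) hpos]
  · -- i is capacity constrained: raise price slightly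
    push_neg at hA
    set P : ℝ := Real.log (G / Bi) - 1 with hP
    clear_value P
    have hPlog : P = Real.log G - Real.log Bi - 1 := by
      rw [hP, Real.log_div (ne_of_gt hG) (ne_of_gt hBi)]
    have hpiP : pi < P := by
      have := Real.log_lt_log hBi hA
      rw [Real.log_mul (ne_of_gt hG) (Real.exp_pos _).ne', Real.log_exp] at this
      rw [hPlog]; linarith
    set p : ℝ := min ((pi + pj) / 2) ((pi + P) / 2) with hp
    clear_value p
    have hpi_p : pi < p := by
      rw [hp]; exact lt_min (by linarith) (by linarith)
    have hp_pj : p < pj := by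
      rw [hp]; exact lt_of_le_of_lt (min_le_left _ _) (by linarith)
    have hp_P : p < P := by
      rw [hp]; exact lt_of_le_of_lt (min_le_right _ _) (by linarith)
    have hcap : Bi < G * Real.exp (-(1 + p)) := by
      have h1 : Real.log Bi < Real.log G + (-(1 + p)) := by
        rw [hPlog] at hp_P; linarith
      have h2 : Bi < Real.exp (Real.log G + (-(1 + p))) := by
        calc Bi = Real.exp (Real.log Bi) := (Real.exp_log hBi).symm
          _ < _ := Real.exp_lt_exp.2 h1
      rwa [Real.exp_add, Real.exp_log hG] at h2
    have hcap' : Bi ≤ G * Real.exp (-(1 + pi)) := hA.le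
    have := hi p (by linarith)
    rw [realizedDemand_lt G Bi Bj p pj hp_pj,
        realizedDemand_lt G Bi Bj pi pj hlt,
        min_eq_left hcap.le, min_eq_left hcap'] at this
    nlinarith

/-- Proposition 1: if both operators lease positive bandwidth, every pure Nash
equilibrium of the high-SNR pricing game is symmetric. -/
theorem stmt_3 (G Bi Bj : ℝ) (hG : 0 < G) (hBi : 0 < Bi) (hBj : 0 < Bj)
    (pi pj : ℝ) (h : IsPricingNE G Bi Bj pi pj) : pi = pj := by
  by_contra hne
  rcases lt_or_gt_of_ne hne with hlt | hgt
  · exact no_asym_NE G Bi Bj hG hBi hBj pi pj h hlt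
  · exact no_asym_NE G Bj Bi hG hBj hBi pj pi ⟨h.2.1, h.1, h.2.2.2, h.2.2.1⟩ hgt
end

section
/- (Theorem 1, low investment regime) Fix G > 0 and bandwidths B_i > 0, B_j > 0 with B_i + B_j ≤ G·e^{−2}. Then the symmetric price pair p_i* = p_j* = ln(G/(B_i + B_j)) − 1 is a Nash equilibrium of the high-SNR pricing game, and it is the unique Nash equilibrium; at this equilibrium operator i's realized demand equals B_i and its revenue equals B_i·(ln(G/(B_i + B_j)) − 1). -/
private lemma expinv (x : ℝ) : Real.exp (-x) * Real.exp x = 1 := by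
  rw [Real.exp_neg]
  exact inv_mul_cancel₀ (Real.exp_ne_zero x)

private lemma halfmax (a b : ℝ) : a/2 + max (a/2 - b) 0 = max (a - b) (a/2) := by
  rcases le_total (a/2 - b) 0 with h | h
  · rw [max_eq_right h, add_zero, max_eq_right (by linarith)]
  · rw [max_eq_left h, max_eq_left (by linarith)]; ring

private lemma rd_eq (G B C p : ℝ) :
    realizedDemand G B C p p
      = min B (max (G * Real.exp (-(1 + p)) - C) (G * Real.exp (-(1 + p)) / 2)) := by
  simp only [realizedDemand, lt_irrefl, if_false, if_neg (lt_irrefl p)]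
  rw [halfmax]

private lemma key (G S : ℝ) (hG : 0 < G) (hS : 0 < S) (hsum : S ≤ G * Real.exp (-2)) :
    1 ≤ Real.log (G/S) - 1 ∧ G * Real.exp (-(1 + (Real.log (G/S) - 1))) = S := by
  have hGS : 0 < G / S := div_pos hG hS
  constructor
  · have h2 : Real.exp 2 ≤ G / S := by
      rw [le_div_iff₀ hS]
      have h3 : Real.exp 2 * S ≤ Real.exp 2 * (G * Real.exp (-2)) :=
        mul_le_mul_of_nonneg_left hsum (Real.exp_pos 2).le
      have h4 : Real.exp 2 * (G * Real.exp (-2)) = G := by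
        rw [Real.exp_neg]; field_simp
      linarith
    have := (Real.le_log_iff_exp_le hGS).mpr h2
    linarith
  · have h1 : -(1 + (Real.log (G/S) - 1)) = -Real.log (G/S) := by ring
    rw [h1, Real.exp_neg, Real.exp_log hGS]
    field_simp

private lemma undercut (G B C p Q : ℝ) (hG : 0 < G) (hp : 0 < p) (hQ0 : 0 ≤ Q)
    (hQB : Q < B) (hQD : Q < G * Real.exp (-(1 + p)))
    (h : ∀ p', 0 ≤ p' → p' * realizedDemand G B C p' p ≤ p * Q) : False := by
  set M := min B (G * Real.exp (-(1 + p))) with hM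
  have hMQ : Q < M := lt_min hQB hQD
  have hM0 : 0 < M := lt_of_le_of_lt hQ0 hMQ
  set p' := (p*Q/M + p)/2 with hp'
  have h1 : p*Q/M < p := by rw [div_lt_iff₀ hM0]; nlinarith
  have h2 : 0 ≤ p*Q/M := by positivity
  have hp'lt : p' < p := by rw [hp']; linarith
  have hp'0 : 0 ≤ p' := by rw [hp']; linarith
  have hdem : realizedDemand G B C p' p = min B (G * Real.exp (-(1 + p'))) := by
    simp only [realizedDemand, if_pos hp'lt]
  have hge : M ≤ min B (G * Real.exp (-(1 + p'))) := by
    apply le_min (min_le_left _ _)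
    refine le_trans (min_le_right _ _) ?_
    have hee : Real.exp (-(1+p)) ≤ Real.exp (-(1+p')) := Real.exp_le_exp.mpr (by linarith)
    nlinarith
  have hle := h p' hp'0
  rw [hdem] at hle
  have hrev : p * Q < p' * M := by
    have hmid : p*Q/M < p' := by rw [hp']; linarith
    have : p*Q = (p*Q/M)*M := by field_simp
    rw [this]
    exact mul_lt_mul_of_pos_right hmid hM0
  have : p' * M ≤ p' * min B (G * Real.exp (-(1 + p'))) :=
    mul_le_mul_of_nonneg_left hge hp'0
  linarith

private lemma best (G B C : ℝ) (hG : 0 < G) (hB : 0 < B) (hC : 0 < C)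
    (hsum : B + C ≤ G * Real.exp (-2)) :
    realizedDemand G B C (Real.log (G/(B+C)) - 1) (Real.log (G/(B+C)) - 1) = B ∧
    ∀ p, 0 ≤ p → p * realizedDemand G B C p (Real.log (G/(B+C)) - 1)
      ≤ (Real.log (G/(B+C)) - 1) * B := by
  obtain ⟨hq1, hDq⟩ := key G (B+C) hG (by linarith) hsum
  set q := Real.log (G/(B+C)) - 1 with hq
  have hrdq : realizedDemand G B C q q = B := by
    rw [rd_eq, hDq]
    exact min_eq_left (le_max_of_le_left (by linarith))
  refine ⟨hrdq, fun p hp => ?_⟩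
  rcases lt_trichotomy p q with hlt | heq | hgt
  · have hd : realizedDemand G B C p q = B := by
      simp only [realizedDemand, if_pos hlt]
      apply min_eq_left
      have hee : Real.exp (-(1+q)) ≤ Real.exp (-(1+p)) := Real.exp_le_exp.mpr (by linarith)
      nlinarith
    rw [hd]
    nlinarith
  · rw [heq, hrdq]
  · have he : Real.exp (-(1+q)) * Real.exp (1+q) = 1 := expinv (1+q)
    have hG' : G = (B+C) * Real.exp (1+q) := by
      have := Real.exp_pos (1+q)
      nlinarith
    have hd : realizedDemand G B C p q = B * (Real.exp (1+q) * Real.exp (-(1+p))) := by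
      have h1 : ¬ p < q := not_lt.mpr hgt.le
      have h2 : ¬ G * Real.exp (-(1+q)) ≤ C := by rw [hDq]; linarith
      simp only [realizedDemand, if_neg h1, if_pos hgt, if_neg h2]
      have hGe : G - C * Real.exp (1+q) = B * Real.exp (1+q) := by rw [hG']; ring
      rw [hGe, min_eq_right, mul_assoc]
      have hee : Real.exp (1+q) * Real.exp (-(1+p)) ≤ 1 := by
        rw [← Real.exp_add]
        calc Real.exp (1 + q + -(1+p)) ≤ Real.exp 0 := Real.exp_le_exp.mpr (by linarith)
        _ = 1 := Real.exp_zero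
      nlinarith [Real.exp_pos (1+q), Real.exp_pos (-(1+p))]
    rw [hd]
    have hepos := Real.exp_pos (p - q)
    have hqe : p ≤ q * Real.exp (p - q) := by
      have h1 := Real.add_one_le_exp (p - q)
      nlinarith
    have hkey : p * (Real.exp (1+q) * Real.exp (-(1+p))) ≤ q := by
      have hes : Real.exp (1+q) * Real.exp (-(1+p)) = (Real.exp (p - q))⁻¹ := by
        rw [← Real.exp_add, ← Real.exp_neg]
        congr 1; ring
      rw [hes, ← div_eq_mul_inv, div_le_iff₀ hepos]
      exact hqe
    nlinarith

private lemma ne_not_lt (G Bi Bj pi pj : ℝ) (hG : 0 < G) (hBi : 0 < Bi) (hBj : 0 < Bj)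
    (hsum : Bi + Bj ≤ G * Real.exp (-2)) (h : IsPricingNE G Bi Bj pi pj) : ¬ pi < pj := by
  intro hlt
  obtain ⟨hpi, hpj, hi, hj⟩ := h
  by_cases hc : G * Real.exp (-(1+pi)) ≤ Bi
  · have hQj : realizedDemand G Bj Bi pj pi = 0 := by
      simp only [realizedDemand, if_neg (not_lt.mpr hlt.le), if_pos hlt, if_pos hc]
    have hpi1 : 1 < pi := by
      have h1 : G * Real.exp (-(1+pi)) < G * Real.exp (-2) := lt_of_le_of_lt hc (by linarith)
      have h2 := (mul_lt_mul_iff_right₀ hG).mp h1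
      have h3 := Real.exp_lt_exp.mp h2
      linarith
    have h1 := hj 1 one_pos.le
    rw [hQj, mul_zero] at h1
    have hd1 : realizedDemand G Bj Bi 1 pi = min Bj (G * Real.exp (-(1+1))) := by
      simp only [realizedDemand, if_pos hpi1]
    rw [hd1, one_mul] at h1
    have : (0:ℝ) < min Bj (G * Real.exp (-(1+1))) := lt_min hBj (by positivity)
    linarith
  · push_neg at hc
    have hQi : realizedDemand G Bi Bj pi pj = Bi := by
      simp only [realizedDemand, if_pos hlt]; exact min_eq_left hc.le
    have hGBi : 0 < G / Bi := div_pos hG hBi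
    set p' := min (Real.log (G/Bi) - 1) ((pi+pj)/2) with hp'
    have hpit : pi < Real.log (G/Bi) - 1 := by
      have hlt2 : Real.exp (1 + pi) < G / Bi := by
        rw [lt_div_iff₀ hBi]
        have he : Real.exp (-(1+pi)) * Real.exp (1+pi) = 1 := expinv (1+pi)
        nlinarith [Real.exp_pos (1+pi)]
      have := (Real.lt_log_iff_exp_lt hGBi).mpr hlt2
      linarith
    have hplt : pi < p' := lt_min hpit (by linarith)
    have hp'pj : p' < pj := lt_of_le_of_lt (min_le_right _ _) (by linarith)
    have hdp' : realizedDemand G Bi Bj p' pj = Bi := by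
      simp only [realizedDemand, if_pos hp'pj]
      apply min_eq_left
      have h1 : p' ≤ Real.log (G/Bi) - 1 := min_le_left _ _
      have h2 : Real.exp (1+p') ≤ G/Bi := by
        rw [← Real.exp_log hGBi]; exact Real.exp_le_exp.mpr (by linarith)
      rw [le_div_iff₀ hBi] at h2
      have he : Real.exp (-(1+p')) * Real.exp (1+p') = 1 := expinv (1+p')
      nlinarith [Real.exp_pos (1+p')]
    have hfin := hi p' (le_trans hpi hplt.le)
    rw [hdp', hQi] at hfin
    nlinarith

private lemma ne_swap {G Bi Bj pi pj : ℝ} (h : IsPricingNE G Bi Bj pi pj) :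
    IsPricingNE G Bj Bi pj pi := ⟨h.2.1, h.1, h.2.2.2, h.2.2.1⟩

private lemma eq_price (G Bi Bj p : ℝ) (hG : 0 < G) (hBi : 0 < Bi) (hBj : 0 < Bj)
    (hsum : Bi + Bj ≤ G * Real.exp (-2)) (h : IsPricingNE G Bi Bj p p) :
    p = Real.log (G/(Bi+Bj)) - 1 := by
  obtain ⟨hq1, hDq⟩ := key G (Bi+Bj) hG (by linarith) hsum
  set q := Real.log (G/(Bi+Bj)) - 1 with hq
  obtain ⟨hp0, _, hi, hj⟩ := h
  set D := G * Real.exp (-(1+p)) with hD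
  have hD0 : 0 < D := by rw [hD]; positivity
  rcases lt_trichotomy p q with hlt | heq | hgt
  · exfalso
    have hDS : Bi + Bj < D := by
      rw [hD, ← hDq]
      exact mul_lt_mul_of_pos_left (Real.exp_lt_exp.mpr (by linarith)) hG
    have hQi : realizedDemand G Bi Bj p p = Bi := by
      rw [rd_eq, ← hD]
      exact min_eq_left (le_max_of_le_left (by linarith))
    have hfrac : 1 < (D - Bj)/Bi := by rw [lt_div_iff₀ hBi]; linarith
    have hfr0 : 0 < (D - Bj)/Bi := by linarith
    set p' := p + Real.log ((D - Bj)/Bi) with hp'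
    have hlog : 0 < Real.log ((D-Bj)/Bi) := Real.log_pos hfrac
    have hpp' : p < p' := by rw [hp']; linarith
    have hdp' : realizedDemand G Bi Bj p' p = Bi := by
      have h1 : ¬ p' < p := not_lt.mpr hpp'.le
      have h2 : ¬ G * Real.exp (-(1+p)) ≤ Bj := by rw [← hD]; push_neg; linarith
      simp only [realizedDemand, if_neg h1, if_pos hpp', if_neg h2]
      have hcalc : (G - Bj * Real.exp (1+p)) * Real.exp (-(1+p')) = Bi := by
        have he1 : Real.exp (-(1+p')) = Real.exp (-(1+p)) * (Bi/(D-Bj)) := by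
          rw [hp', show -(1+(p + Real.log ((D - Bj)/Bi))) = -(1+p) + -Real.log ((D-Bj)/Bi)
              by ring, Real.exp_add]
          congr 1
          rw [Real.exp_neg, Real.exp_log hfr0, inv_div]
        have he2 : Real.exp (-(1+p)) * Real.exp (1+p) = 1 := expinv (1+p)
        have hne : D - Bj ≠ 0 := by linarith
        rw [he1, show (G - Bj * Real.exp (1+p)) * (Real.exp (-(1+p)) * (Bi/(D-Bj)))
            = (G * Real.exp (-(1+p)) - Bj * (Real.exp (-(1+p)) * Real.exp (1+p)))
              * (Bi/(D-Bj)) by ring, he2, mul_one, ← hD]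
        field_simp
      rw [hcalc, min_self]
    have hfin := hi p' (by linarith)
    rw [hdp', hQi] at hfin
    nlinarith
  · exact heq
  · exfalso
    have hp1 : 1 < p := by linarith
    have hDS : D < Bi + Bj := by
      rw [hD, ← hDq]
      exact mul_lt_mul_of_pos_left (Real.exp_lt_exp.mpr (by linarith)) hG
    by_cases hEi : max (D - Bj) (D/2) < Bi
    · refine undercut G Bi Bj p (max (D - Bj) (D/2)) hG (by linarith)
        (le_max_of_le_right (by linarith)) hEi
        (by rw [← hD]; apply max_lt <;> linarith) ?_
      intro p' hp'
      have hfin := hi p' hp'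
      rwa [rd_eq, ← hD, min_eq_right hEi.le] at hfin
    · push_neg at hEi
      have hBiD2 : Bi ≤ D/2 := by
        rcases le_max_iff.mp hEi with hcase | hcase
        · linarith
        · exact hcase
      have hEj : max (D - Bi) (D/2) = D - Bi := max_eq_left (by linarith)
      refine undercut G Bj Bi p (D - Bi) hG (by linarith) (by linarith) (by linarith)
        (by rw [← hD]; linarith) ?_
      intro p' hp'
      have hfin := hj p' hp'
      rwa [rd_eq, ← hD, hEj, min_eq_right (by linarith)] at hfin

/-- Theorem 1, low investment regime (`Bi + Bj ≤ G·e^{−2}`): the symmetric pair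
`pi* = pj* = ln(G/(Bi+Bj)) − 1` is the unique Nash equilibrium; there operator
`i`'s realized demand equals `Bi` and its revenue equals `Bi·(ln(G/(Bi+Bj)) − 1)`. -/
theorem stmt_4 (G Bi Bj : ℝ) (hG : 0 < G) (hBi : 0 < Bi) (hBj : 0 < Bj)
    (hsum : Bi + Bj ≤ G * Real.exp (-2)) :
    IsPricingNE G Bi Bj (Real.log (G / (Bi + Bj)) - 1) (Real.log (G / (Bi + Bj)) - 1) ∧
    (∀ pi pj : ℝ, IsPricingNE G Bi Bj pi pj →
      pi = Real.log (G / (Bi + Bj)) - 1 ∧ pj = Real.log (G / (Bi + Bj)) - 1) ∧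
    realizedDemand G Bi Bj (Real.log (G / (Bi + Bj)) - 1) (Real.log (G / (Bi + Bj)) - 1) = Bi ∧
    (Real.log (G / (Bi + Bj)) - 1) *
        realizedDemand G Bi Bj (Real.log (G / (Bi + Bj)) - 1) (Real.log (G / (Bi + Bj)) - 1)
      = Bi * (Real.log (G / (Bi + Bj)) - 1) := by
  obtain ⟨hdi, hbri⟩ := best G Bi Bj hG hBi hBj hsum
  obtain ⟨hdj, hbrj⟩ := best G Bj Bi hG hBj hBi (by rwa [add_comm])
  rw [add_comm Bj Bi] at hdj hbrj
  obtain ⟨hq1, _⟩ := key G (Bi+Bj) hG (by linarith) hsum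
  refine ⟨⟨by linarith, by linarith, ?_, ?_⟩, ?_, hdi, ?_⟩
  · intro p hp
    rw [hdi]
    exact hbri p hp
  · intro p hp
    rw [hdj]
    exact hbrj p hp
  · intro pi pj hne
    have h1 := ne_not_lt G Bi Bj pi pj hG hBi hBj hsum hne
    have h2 := ne_not_lt G Bj Bi pj pi hG hBj hBi (by rwa [add_comm]) (ne_swap hne)
    have heq : pi = pj := le_antisymm (not_lt.mp h2) (not_lt.mp h1)
    subst heq
    have := eq_price G Bi Bj pi hG hBi hBj hsum hne
    exact ⟨this, this⟩
  · rw [hdi, mul_comm]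
end

section
/- (Theorem 1, medium investment regime) Fix G > 0 and bandwidths B_i > 0, B_j > 0 with B_i + B_j > G·e^{−2} and min(B_i, B_j) < G·e^{−1}. Then the high-SNR pricing game has no pure Nash equilibrium. -/
lemma lt_demand_iff {G B p : ℝ} (hG : 0 < G) (hB : 0 < B) :
    B < G * Real.exp (-(1 + p)) ↔ 1 + p < Real.log (G / B) := by
  rw [Real.lt_log_iff_exp_lt (by positivity), lt_div_iff₀ hB, Real.exp_neg,
    lt_mul_inv_iff₀ (Real.exp_pos _)]
  constructor <;> intro h <;> linarith

lemma no_NE_lt (G Bi Bj pi pj : ℝ) (hG : 0 < G) (hBi : 0 < Bi) (hBj : 0 < Bj)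
    (hlt : pi < pj) (h : IsPricingNE G Bi Bj pi pj) : False := by
  obtain ⟨hpi, hpj, h3, h4⟩ := h
  rcases le_or_gt (G * Real.exp (-(1 + pi))) Bi with hc | hc
  · -- j gets zero demand
    have hQj : realizedDemand G Bj Bi pj pi = 0 := by
      rw [realizedDemand, if_neg (not_lt.2 hlt.le), if_pos hlt, if_pos hc]
    rcases hpi.eq_or_lt with h0 | h0
    · -- pi = 0 : operator i gets zero revenue, deviate to pj/2
      have hq : (0:ℝ) ≤ pj / 2 := by linarith
      have := h3 (pj / 2) hq
      rw [← h0] at this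
      have hdem : realizedDemand G Bi Bj (pj / 2) pj = min Bi (G * Real.exp (-(1 + pj / 2))) := by
        rw [realizedDemand, if_pos (by linarith)]
      rw [hdem, zero_mul] at this
      have hpos : 0 < pj / 2 * min Bi (G * Real.exp (-(1 + pj / 2))) := by
        have : 0 < pj := by rw [← h0] at hlt; exact hlt
        have := Real.exp_pos (-(1 + pj / 2))
        positivity
      linarith
    · -- pi > 0 : operator j deviates to pi/2
      have := h4 (pi / 2) (by linarith)
      rw [hQj, mul_zero] at this
      have hdem : realizedDemand G Bj Bi (pi / 2) pi = min Bj (G * Real.exp (-(1 + pi / 2))) := by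
        rw [realizedDemand, if_pos (by linarith)]
      rw [hdem] at this
      have hpos : 0 < pi / 2 * min Bj (G * Real.exp (-(1 + pi / 2))) := by
        have := Real.exp_pos (-(1 + pi / 2))
        positivity
      linarith
  · -- Bi < D(pi) : i deviates slightly upward
    set t := Real.log (G / Bi) with ht
    have hti : 1 + pi < t := (lt_demand_iff hG hBi).1 hc
    set p' := min ((pi + pj) / 2) ((pi + (t - 1)) / 2) with hp'
    have h1 : pi < p' := lt_min (by linarith) (by linarith)
    have h2 : p' < pj := lt_of_le_of_lt (min_le_left _ _) (by linarith)
    have h3' : 1 + p' < t := by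
      have := min_le_right ((pi + pj) / 2) ((pi + (t - 1)) / 2)
      rw [← hp'] at this; linarith
    have hBd : Bi < G * Real.exp (-(1 + p')) := (lt_demand_iff hG hBi).2 h3'
    have hQi : realizedDemand G Bi Bj pi pj = Bi := by
      rw [realizedDemand, if_pos hlt, min_eq_left hc.le]
    have hQ' : realizedDemand G Bi Bj p' pj = Bi := by
      rw [realizedDemand, if_pos h2, min_eq_left hBd.le]
    have := h3 p' (by linarith)
    rw [hQi, hQ'] at this
    nlinarith

lemma sum_le_of_share {a b D : ℝ}
    (ha : a ≤ D / 2 + max (D / 2 - b) 0) (hb : b ≤ D / 2 + max (D / 2 - a) 0) :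
    a + b ≤ D := by
  rcases le_total (D / 2 - b) 0 with h1 | h1 <;> rcases le_total (D / 2 - a) 0 with h2 | h2 <;>
    simp [max_eq_right, max_eq_left, h1, h2] at ha hb <;> linarith

/-- At an equal-price NE with positive price, each operator must sell its full bandwidth. -/
lemma share_ge (G Bi Bj p : ℝ) (hG : 0 < G) (hBi : 0 < Bi) (hBj : 0 < Bj) (hp : 0 < p)
    (h3 : ∀ q : ℝ, 0 ≤ q → q * realizedDemand G Bi Bj q p ≤ p * realizedDemand G Bi Bj p p) :
    Bi ≤ G * Real.exp (-(1 + p)) / 2 + max (G * Real.exp (-(1 + p)) / 2 - Bj) 0 := by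
  by_contra hcon
  push_neg at hcon
  set D := G * Real.exp (-(1 + p)) with hD
  have hDpos : 0 < D := by positivity
  set S := D / 2 + max (D / 2 - Bj) 0 with hS
  have hQ : realizedDemand G Bi Bj p p = S := by
    rw [realizedDemand, if_neg (lt_irrefl p), if_neg (lt_irrefl p), min_eq_right hcon.le]
  set m := min Bi D with hm
  have hm0 : 0 < m := lt_min hBi hDpos
  have hmBi : m ≤ Bi := min_le_left _ _
  have hmD : m ≤ D := min_le_right _ _
  have hSD : S < D := by
    have h1 : max (D / 2 - Bj) 0 < D / 2 := max_lt (by linarith) (by linarith)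
    rw [hS]; linarith
  have hS0 : 0 ≤ S := by
    have h2 := le_max_right (D / 2 - Bj) 0
    rw [hS]; linarith
  have hSm : S < m := lt_min hcon hSD
  set p' := p * (S + m) / (2 * m) with hp'
  have hp'0 : 0 ≤ p' := by rw [hp']; positivity
  have hp'lt : p' < p := by
    rw [hp', div_lt_iff₀ (by linarith)]
    nlinarith
  have hdem : realizedDemand G Bi Bj p' p = min Bi (G * Real.exp (-(1 + p'))) := by
    rw [realizedDemand, if_pos hp'lt]
  have hmono : m ≤ min Bi (G * Real.exp (-(1 + p'))) := by
    apply le_min (min_le_left _ _)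
    refine le_trans (min_le_right _ _) ?_
    rw [hD]
    have h5 : Real.exp (-(1 + p)) ≤ Real.exp (-(1 + p')) := Real.exp_le_exp.2 (by linarith)
    nlinarith
  have hineq := h3 p' hp'0
  rw [hQ, hdem] at hineq
  have hge : p' * m ≤ p' * min Bi (G * Real.exp (-(1 + p'))) :=
    mul_le_mul_of_nonneg_left hmono hp'0
  have hkey : p * S < p' * m := by
    rw [hp', div_mul_eq_mul_div, lt_div_iff₀ (by linarith : (0:ℝ) < 2 * m)]
    nlinarith [mul_pos (mul_pos hp hm0) (sub_pos.2 hSm)]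
  linarith


/-- Theorem 1, medium investment regime (`Bi + Bj > G·e^{−2}` and
`min(Bi, Bj) < G·e^{−1}`): the high-SNR pricing game has no pure Nash equilibrium. -/
theorem stmt_6 (G Bi Bj : ℝ) (hG : 0 < G) (hBi : 0 < Bi) (hBj : 0 < Bj)
    (hsum : G * Real.exp (-2) < Bi + Bj) (hmin : min Bi Bj < G * Real.exp (-1)) :
    ¬ ∃ pi pj : ℝ, IsPricingNE G Bi Bj pi pj := by
  rintro ⟨pi, pj, h⟩
  have hsymm : IsPricingNE G Bj Bi pj pi := ⟨h.2.1, h.1, h.2.2.2, h.2.2.1⟩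
  rcases lt_trichotomy pi pj with hlt | heq | hgt
  · exact no_NE_lt G Bi Bj pi pj hG hBi hBj hlt h
  · subst heq
    obtain ⟨hp, -, h3, h4⟩ := h
    rcases hp.eq_or_lt with h0 | h0
    · -- equal price 0 : somebody deviates to price 1
      subst h0
      have key : ∀ (A B : ℝ), 0 < A → B < G * Real.exp (-1) →
          (∀ q : ℝ, 0 ≤ q → q * realizedDemand G A B q 0 ≤ 0 * realizedDemand G A B 0 0) →
          False := by
        intro A B hA hB hbr
        have hc : ¬ G * Real.exp (-(1 + (0:ℝ))) ≤ B := by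
          push_neg; norm_num; exact hB
        have hdem : realizedDemand G A B 1 0 =
            min A ((G - B * Real.exp (1 + 0)) * Real.exp (-(1 + 1))) := by
          rw [realizedDemand, if_neg (by norm_num), if_pos (by norm_num), if_neg hc]
        have hBpos : 0 < G - B * Real.exp (1 + 0) := by
          have h1 : B * Real.exp 1 < G * Real.exp (-1) * Real.exp 1 :=
            mul_lt_mul_of_pos_right hB (Real.exp_pos 1)
          have h2 : Real.exp (-1) * Real.exp 1 = 1 := by
            rw [← Real.exp_add]; norm_num
          rw [mul_assoc, h2, mul_one] at h1
          norm_num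
          rcases le_or_gt B 0 with hB0 | hB0
          · nlinarith [Real.exp_pos (1:ℝ)]
          · nlinarith
        have hpos : 0 < min A ((G - B * Real.exp (1 + 0)) * Real.exp (-(1 + 1))) :=
          lt_min hA (by positivity)
        have := hbr 1 (by norm_num)
        rw [hdem, zero_mul, one_mul] at this
        linarith
      rcases min_lt_iff.1 hmin with hm | hm
      · exact key Bj Bi hBj hm h4
      · exact key Bi Bj hBi hm h3
    · -- equal positive price
      have hA := share_ge G Bi Bj pi hG hBi hBj h0 h3
      have hB := share_ge G Bj Bi pi hG hBj hBi h0 h4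
      have hsum2 : Bi + Bj ≤ G * Real.exp (-(1 + pi)) := sum_le_of_share hA hB
      have hp1 : pi < 1 := by
        have h1 : G * Real.exp (-2) < G * Real.exp (-(1 + pi)) := by linarith
        have h2 : (-2 : ℝ) < -(1 + pi) := Real.exp_lt_exp.1 ((mul_lt_mul_iff_right₀ hG).1 h1)
        linarith
      have hQi : realizedDemand G Bi Bj pi pi = Bi := by
        rw [realizedDemand, if_neg (lt_irrefl pi), if_neg (lt_irrefl pi), min_eq_left hA]
      have hmul : Real.exp (1 + pi) * Real.exp (-(1 + pi)) = 1 := by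
        rw [← Real.exp_add, show (1 + pi) + -(1 + pi) = 0 by ring, Real.exp_zero]
      have hCe : (G - Bj * Real.exp (1 + pi)) * Real.exp (-(1 + pi)) =
          G * Real.exp (-(1 + pi)) - Bj := by
        rw [sub_mul, mul_assoc, hmul, mul_one]
      have hDj : ¬ G * Real.exp (-(1 + pi)) ≤ Bj := by push_neg; linarith
      have hC0 : 0 < G - Bj * Real.exp (1 + pi) := by
        nlinarith [Real.exp_pos (-(1 + pi))]
      rcases lt_or_eq_of_le (by linarith : Bi ≤ G * Real.exp (-(1 + pi)) - Bj) with hcs | hcs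
      · -- residual strictly exceeds Bi : deviate slightly upward
        set C := G - Bj * Real.exp (1 + pi) with hCdef
        have hc : Bi < C * Real.exp (-(1 + pi)) := by rw [hCe]; linarith
        have hti : 1 + pi < Real.log (C / Bi) := (lt_demand_iff hC0 hBi).1 hc
        set t := Real.log (C / Bi) with ht
        set p' := (pi + (t - 1)) / 2 with hp'
        have h1 : pi < p' := by rw [hp']; linarith
        have h2 : 1 + p' < t := by rw [hp']; linarith
        have hBd : Bi < C * Real.exp (-(1 + p')) := (lt_demand_iff hC0 hBi).2 h2
        have hdem : realizedDemand G Bi Bj p' pi = Bi := by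
          rw [realizedDemand, if_neg (not_lt.2 h1.le), if_pos h1, if_neg hDj,
            min_eq_left hBd.le]
        have := h3 p' (by linarith)
        rw [hQi, hdem] at this
        nlinarith
      · -- residual exactly Bi : deviate to price 1
        have hx : (G - Bj * Real.exp (1 + pi)) * Real.exp (-(1 + 1)) =
            Bi * Real.exp (pi - 1) := by
          have he : Real.exp (-(1 + pi)) * Real.exp (pi - 1) = Real.exp (-(1 + (1:ℝ))) := by
            rw [← Real.exp_add, show -(1 + pi) + (pi - 1) = -(1 + (1:ℝ)) by ring]
          calc (G - Bj * Real.exp (1 + pi)) * Real.exp (-(1 + 1))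
              = (G - Bj * Real.exp (1 + pi)) * (Real.exp (-(1 + pi)) * Real.exp (pi - 1)) := by
                rw [he]
            _ = ((G - Bj * Real.exp (1 + pi)) * Real.exp (-(1 + pi))) * Real.exp (pi - 1) := by
                ring
            _ = Bi * Real.exp (pi - 1) := by rw [hCe, ← hcs]
        have hlt1 : Bi * Real.exp (pi - 1) < Bi := by
          nlinarith [Real.exp_lt_one_iff.2 (by linarith : pi - 1 < 0)]
        have hdem : realizedDemand G Bi Bj 1 pi = Bi * Real.exp (pi - 1) := by
          rw [realizedDemand, if_neg (not_lt.2 hp1.le), if_pos hp1, if_neg hDj, hx,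
            min_eq_right hlt1.le]
        have := h3 1 (by norm_num)
        rw [hQi, hdem, one_mul] at this
        have hgt : pi < Real.exp (pi - 1) := by
          have := Real.add_one_lt_exp (by linarith : pi - 1 ≠ 0)
          linarith
        nlinarith
  · exact no_NE_lt G Bj Bi pj pi hG hBj hBi hgt hsymm
end

section
/- The function φ(H) = ln(1 + H) − H/(1 + H) is strictly increasing on [0, ∞), with φ(0) = 0 and φ(H) → ∞ as H → ∞; hence for every p > 0 there is a unique H(p) > 0 with φ(H(p)) = p. Moreover, for every g > 0 the function w ↦ w·ln(1 + g/w) − p·w on (0, ∞) has the unique maximizer w* = g/H(p), the resulting SNR is g/w* = H(p) (independent of g), and the maximum payoff equals (g/H(p))·(ln(1 + H(p)) − p), which is linear in g. -/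
open Real Filter

/-- `φ(H) = ln(1 + H) − H/(1 + H)`, whose value at `H` is the price at which a
user's optimal SNR equals `H` in the general-SNR model. -/
noncomputable def phi (H : ℝ) : ℝ := Real.log (1 + H) - H / (1 + H)

/-!
Everything rests on the strict concavity of `log` in the form
`log y - log x < (y - x) / x` for `y ≠ x`. Applied at `x = 1 + b`, `y = 1 + a` it gives
`φ b - φ a > (b - a) a / ((1 + a) (1 + b)) ≥ 0`; existence of `H(p)` is then the
intermediate value theorem. For the payoff put `h = g / w` and `p = φ H`: the same
tangent-line bound at `1 + H` gives `w (log (1 + h) - p) < w h / (1 + H) = g / (1 + H)`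
whenever `h ≠ H`, and `g / (1 + H)` is exactly the payoff at `w = g / H`.
-/

theorem log_sub_log_lt_div {x y : ℝ} (hx : 0 < x) (hy : 0 < y) (hne : y ≠ x) :
    log y - log x < (y - x) / x := by
  have h := log_lt_sub_one_of_pos (div_pos hy hx) (by rwa [ne_eq, div_eq_one_iff_eq hx.ne'])
  rw [log_div hy.ne' hx.ne'] at h
  rwa [sub_div, div_self hx.ne']

theorem phi_zero : phi 0 = 0 := by simp [phi]

theorem phi_strictMonoOn : StrictMonoOn phi (Set.Ici 0) := by
  intro a (ha : 0 ≤ a) b (hb : 0 ≤ b) hab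
  have hlog :=
    log_sub_log_lt_div (x := 1 + b) (y := 1 + a) (by linarith) (by linarith) (by linarith)
  have hfrac : b / (1 + b) - a / (1 + a) = (b - a) / ((1 + a) * (1 + b)) := by
    field_simp; ring
  have hgap : (b - a) / (1 + b) - (b - a) / ((1 + a) * (1 + b))
      = (b - a) * a / ((1 + a) * (1 + b)) := by
    field_simp; ring
  have hgap_nonneg : 0 ≤ (b - a) * a / ((1 + a) * (1 + b)) := by
    apply div_nonneg <;> nlinarith
  have hneg : (1 + a - (1 + b)) / (1 + b) = -((b - a) / (1 + b)) := by ring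
  unfold phi
  linarith

theorem phi_continuousOn : ContinuousOn phi (Set.Ioi (-1)) := by
  unfold phi
  have : ∀ x ∈ Set.Ioi (-1 : ℝ), 1 + x ≠ 0 := fun x (hx : -1 < x) => by linarith
  fun_prop (disch := assumption)

theorem tendsto_phi_atTop : Tendsto phi atTop atTop := by
  have hlog : Tendsto (fun H : ℝ => log (1 + H) - 1) atTop atTop :=
    tendsto_atTop_add_const_right _ (-1)
      (tendsto_log_atTop.comp (tendsto_atTop_add_const_left _ 1 tendsto_id))
  refine tendsto_atTop_mono' atTop ?_ hlog
  filter_upwards [eventually_ge_atTop 0] with H hH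
  have : H / (1 + H) ≤ 1 := (div_le_one (by linarith)).2 (by linarith)
  unfold phi
  linarith

theorem exists_pos_phi_eq {p : ℝ} (hp : 0 < p) : ∃ H, 0 < H ∧ phi H = p := by
  obtain ⟨b, hbp, hb⟩ :=
    ((tendsto_phi_atTop.eventually_ge_atTop p).and (eventually_ge_atTop 0)).exists
  obtain ⟨H, ⟨hH0, -⟩, hHp⟩ := intermediate_value_Icc hb
    (phi_continuousOn.mono fun x hx => (by linarith [hx.1] : -1 < x))
    ⟨by rw [phi_zero]; exact hp.le, hbp⟩
  refine ⟨H, hH0.lt_of_ne ?_, hHp⟩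
  rintro rfl
  exact hp.ne' (hHp ▸ phi_zero)

noncomputable def payoff (g p w : ℝ) : ℝ := w * log (1 + g / w) - p * w

theorem payoff_lt_of_div_ne {g w H : ℝ} (hg : 0 ≤ g) (hw : 0 < w) (hH : -1 < H)
    (hne : g / w ≠ H) : payoff g (phi H) w < g / (1 + H) := by
  have hlog := log_sub_log_lt_div (x := 1 + H) (y := 1 + g / w) (by linarith) (by positivity)
    (by contrapose! hne; linarith)
  calc payoff g (phi H) w = w * (log (1 + g / w) - log (1 + H) + H / (1 + H)) := by
        unfold payoff phi; ring
    _ < w * ((1 + g / w - (1 + H)) / (1 + H) + H / (1 + H)) := by gcongr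
    _ = g / (1 + H) := by field_simp; ring

theorem payoff_div_phi {g H : ℝ} (hg : g ≠ 0) (hH : 0 < H) :
    payoff g (phi H) (g / H) = g / (1 + H) := by
  unfold payoff phi
  rw [div_div_cancel₀ hg]
  field_simp
  ring

/-- `φ` is strictly increasing on `[0,∞)` with `φ(0) = 0` and `φ(H) → ∞`; hence
for every `p > 0` there is a unique `H(p) > 0` with `φ(H(p)) = p`.  Moreover, for
every `g > 0` the payoff `w ↦ w·ln(1 + g/w) − p·w` on `(0,∞)` has the unique
maximizer `w* = g/H(p)`, the resulting SNR `g/w*` equals `H(p)` (independent of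
`g`), and the maximum payoff is `(g/H(p))·(ln(1 + H(p)) − p)`, linear in `g`. -/
theorem stmt_11 :
    StrictMonoOn phi (Set.Ici 0) ∧ phi 0 = 0 ∧ Tendsto phi atTop atTop ∧
    ∀ p : ℝ, 0 < p →
      (∃! H : ℝ, 0 < H ∧ phi H = p) ∧
      ∀ H : ℝ, 0 < H → phi H = p → ∀ g : ℝ, 0 < g →
        (∀ w ∈ Set.Ioi (0 : ℝ), w ≠ g / H →
          w * Real.log (1 + g / w) - p * w <
            (g / H) * Real.log (1 + g / (g / H)) - p * (g / H)) ∧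
        g / (g / H) = H ∧
        (g / H) * Real.log (1 + g / (g / H)) - p * (g / H)
          = (g / H) * (Real.log (1 + H) - p) := by
  refine ⟨phi_strictMonoOn, phi_zero, tendsto_phi_atTop, fun p hp => ⟨?_, ?_⟩⟩
  · obtain ⟨H, hH, hHp⟩ := exists_pos_phi_eq hp
    exact ⟨H, ⟨hH, hHp⟩, fun y ⟨hy, hyp⟩ =>
      phi_strictMonoOn.injOn hy.le hH.le (hyp.trans hHp.symm)⟩
  · rintro H hH rfl g hg
    have hsnr : g / (g / H) = H := div_div_cancel₀ hg.ne'
    refine ⟨fun w (hw : 0 < w) hne => ?_, hsnr, by rw [hsnr]; ring⟩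
    show payoff g (phi H) w < payoff g (phi H) (g / H)
    rw [payoff_div_phi hg.ne' hH]
    exact payoff_lt_of_div_ne hg.le hw (by linarith) fun h =>
      hne (by rw [← h, div_div_cancel₀ hg.ne'])
end

section
/- Fix G > 0 and B_j ≥ 0. The general-SNR revenue function R_i(B_i) = B_i·(ln(1 + G/(B_i + B_j)) − G/(B_i + B_j + G)) has second derivative R_i''(B_i) = −G²·(−B_i² + G·B_i + B_i·B_j + 2·G·B_j + 2·B_j²)/((B_i + B_j + G)³·(B_i + B_j)²); in particular R_i''(B_i) < 0 for all 0 < B_i < G + B_j, so R_i is strictly concave in B_i on (0, G + B_j). -/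
/-!
Write `x = B_i + B_j` and `p(x) = ln(1 + G/x) − G/(x + G)` for the equilibrium price, so that
`R(B_i) = B_i · p(x)` and `R'' = 2 p'(x) + B_i p''(x)`, with `p'(x) = −G²/(x (x+G)²)` and
`p''(x) = G² (3x + G)/(x² (x+G)³)`. Over the common denominator the numerator of `R''` is `−G²`
times `B_i (G + B_j − B_i) + 2 B_j (G + B_j)`, which is positive for `0 < B_i < G + B_j`; strict
concavity then follows from the second-derivative test.
-/

open Real

noncomputable def equilibriumPrice (G x : ℝ) : ℝ := log (1 + G / x) - G / (x + G)

section

variable {G x : ℝ}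

theorem hasDerivAt_equilibriumPrice (hx : x ≠ 0) (hxG : x + G ≠ 0) :
    HasDerivAt (equilibriumPrice G) (-G ^ 2 / (x * (x + G) ^ 2)) x := by
  have hlog : 1 + G / x ≠ 0 := by
    rw [one_add_div hx]
    exact div_ne_zero hxG hx
  have hquot : HasDerivAt (fun y => G / y) ((0 * x - G * 1) / x ^ 2) x :=
    (hasDerivAt_const x G).div (hasDerivAt_id' x) hx
  have hshift : HasDerivAt (fun y => G / (y + G)) ((0 * (x + G) - G * 1) / (x + G) ^ 2) x :=
    (hasDerivAt_const x G).div ((hasDerivAt_id' x).add_const G) hxG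
  refine ((hquot.const_add 1).log hlog |>.sub hshift).congr_deriv ?_
  field_simp
  ring

theorem hasDerivAt_deriv_equilibriumPrice (hx : x ≠ 0) (hxG : x + G ≠ 0) :
    HasDerivAt (fun x => -G ^ 2 / (x * (x + G) ^ 2))
      (G ^ 2 * (3 * x + G) / (x ^ 2 * (x + G) ^ 3)) x := by
  have hden : HasDerivAt (fun y => y * (y + G) ^ 2)
      (1 * (x + G) ^ 2 + x * (2 * (x + G) ^ 1 * 1)) x :=
    (hasDerivAt_id' x).mul (((hasDerivAt_id' x).add_const G).pow 2)
  refine ((hasDerivAt_const x (-G ^ 2)).div hden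
    (mul_ne_zero hx (pow_ne_zero 2 hxG))).congr_deriv ?_
  field_simp
  ring

end

section

variable {G Bj B : ℝ}

theorem hasDerivAt_revenue (hx : B + Bj ≠ 0) (hxG : B + Bj + G ≠ 0) :
    HasDerivAt (fun B => B * equilibriumPrice G (B + Bj))
      (equilibriumPrice G (B + Bj) + B * (-G ^ 2 / ((B + Bj) * (B + Bj + G) ^ 2))) B := by
  have h : HasDerivAt (fun B => B * equilibriumPrice G (B + Bj))
      (1 * equilibriumPrice G (B + Bj) + B * (-G ^ 2 / ((B + Bj) * (B + Bj + G) ^ 2))) B :=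
    (hasDerivAt_id' B).mul ((hasDerivAt_equilibriumPrice hx hxG).comp_add_const B Bj)
  rwa [one_mul] at h

theorem hasDerivAt_deriv_revenue (hx : B + Bj ≠ 0) (hxG : B + Bj + G ≠ 0) :
    HasDerivAt
      (fun B => equilibriumPrice G (B + Bj) + B * (-G ^ 2 / ((B + Bj) * (B + Bj + G) ^ 2)))
      (-G ^ 2 * (-B ^ 2 + G * B + B * Bj + 2 * G * Bj + 2 * Bj ^ 2) /
        ((B + Bj + G) ^ 3 * (B + Bj) ^ 2)) B := by
  refine (((hasDerivAt_equilibriumPrice hx hxG).comp_add_const B Bj).add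
    ((hasDerivAt_id' B).mul
      ((hasDerivAt_deriv_equilibriumPrice hx hxG).comp_add_const B Bj))).congr_deriv ?_
  field_simp
  ring

theorem deriv_deriv_revenue (hx : B + Bj ≠ 0) (hxG : B + Bj + G ≠ 0) :
    deriv (deriv fun B => B * equilibriumPrice G (B + Bj)) B =
      -G ^ 2 * (-B ^ 2 + G * B + B * Bj + 2 * G * Bj + 2 * Bj ^ 2) /
        ((B + Bj + G) ^ 3 * (B + Bj) ^ 2) := by
  have hnear : ∀ᶠ B' in nhds B, B' + Bj ≠ 0 ∧ B' + Bj + G ≠ 0 :=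
    ((continuous_add_const Bj).continuousAt.eventually_ne hx).and
      ((continuous_add_const G).comp (continuous_add_const Bj) |>.continuousAt.eventually_ne hxG)
  have hderiv : deriv (fun B => B * equilibriumPrice G (B + Bj)) =ᶠ[nhds B]
      fun B => equilibriumPrice G (B + Bj) + B * (-G ^ 2 / ((B + Bj) * (B + Bj + G) ^ 2)) :=
    hnear.mono fun B' hB' => (hasDerivAt_revenue hB'.1 hB'.2).deriv
  rw [hderiv.deriv_eq]
  exact (hasDerivAt_deriv_revenue hx hxG).deriv

end

theorem revenue_secondDeriv_neg {G Bj B : ℝ} (hG : 0 < G) (hBj : 0 ≤ Bj)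
    (hB : B ∈ Set.Ioo 0 (G + Bj)) :
    -G ^ 2 * (-B ^ 2 + G * B + B * Bj + 2 * G * Bj + 2 * Bj ^ 2) /
      ((B + Bj + G) ^ 3 * (B + Bj) ^ 2) < 0 := by
  obtain ⟨hB0, hBlt⟩ := hB
  have hnum : 0 < -B ^ 2 + G * B + B * Bj + 2 * G * Bj + 2 * Bj ^ 2 := by
    rw [show -B ^ 2 + G * B + B * Bj + 2 * G * Bj + 2 * Bj ^ 2
        = B * (G + Bj - B) + 2 * Bj * (G + Bj) by ring]
    exact add_pos_of_pos_of_nonneg (mul_pos hB0 (sub_pos.2 hBlt)) (by positivity)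
  have hx : 0 < B + Bj := by linarith
  refine div_neg_of_neg_of_pos ?_ (by positivity)
  rw [neg_mul]
  exact neg_neg_of_pos (mul_pos (pow_pos hG 2) hnum)

/-- General-SNR revenue `R_i(B_i) = B_i·(ln(1 + G/(B_i+B_j)) − G/(B_i+B_j+G))`:
its second derivative equals
`−G²·(−B_i² + G·B_i + B_i·B_j + 2·G·B_j + 2·B_j²)/((B_i+B_j+G)³·(B_i+B_j)²)`,
which is negative for `0 < B_i < G + B_j`, so `R_i` is strictly concave on
`(0, G + B_j)`. -/
theorem stmt_14 (G Bj : ℝ) (hG : 0 < G) (hBj : 0 ≤ Bj) :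
    (∀ Bi ∈ Set.Ioo (0 : ℝ) (G + Bj),
      deriv (deriv (fun B : ℝ => B * (log (1 + G / (B + Bj)) - G / (B + Bj + G)))) Bi
        = -G ^ 2 * (-Bi ^ 2 + G * Bi + Bi * Bj + 2 * G * Bj + 2 * Bj ^ 2) /
            ((Bi + Bj + G) ^ 3 * (Bi + Bj) ^ 2) ∧
      -G ^ 2 * (-Bi ^ 2 + G * Bi + Bi * Bj + 2 * G * Bj + 2 * Bj ^ 2) /
          ((Bi + Bj + G) ^ 3 * (Bi + Bj) ^ 2) < 0) ∧
    StrictConcaveOn ℝ (Set.Ioo (0 : ℝ) (G + Bj))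
      (fun B : ℝ => B * (log (1 + G / (B + Bj)) - G / (B + Bj + G))) := by
  have hne : ∀ B ∈ Set.Ioo (0 : ℝ) (G + Bj), B + Bj ≠ 0 ∧ B + Bj + G ≠ 0 := fun B hB =>
    ⟨by linarith [hB.1], by linarith [hB.1]⟩
  have hderiv2 : ∀ Bi ∈ Set.Ioo (0 : ℝ) (G + Bj),
      deriv (deriv fun B => B * equilibriumPrice G (B + Bj)) Bi
        = -G ^ 2 * (-Bi ^ 2 + G * Bi + Bi * Bj + 2 * G * Bj + 2 * Bj ^ 2) /
            ((Bi + Bj + G) ^ 3 * (Bi + Bj) ^ 2) := fun Bi hBi =>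
    deriv_deriv_revenue (hne Bi hBi).1 (hne Bi hBi).2
  refine ⟨fun Bi hBi => ⟨hderiv2 Bi hBi, revenue_secondDeriv_neg hG hBj hBi⟩, ?_⟩
  refine strictConcaveOn_of_deriv2_neg' (convex_Ioo _ _) (fun B hB => ?_) fun B hB => ?_
  · exact (hasDerivAt_revenue (hne B hB).1 (hne B hB).2).continuousAt.continuousWithinAt
  · exact (hderiv2 B hB).trans_lt (revenue_secondDeriv_neg hG hBj hB)
end

section
/- (Key step of Theorem 5) Fix G > 0 and B_i, B_j > 0 with B_i + B_j ≤ G·e^{−1}. The coordinated total revenue function f(p) = B_i·p + B_j·(ln((G − B_i·e^{1+p})/B_j) − 1) is well defined and nondecreasing on the interval [0, ln(G/(B_i + B_j)) − 1], with derivative f'(p) = B_i·(1 − B_j·e^{1+p}/(G − B_i·e^{1+p})) ≥ 0 there; consequently f is maximized over this interval at p = ln(G/(B_i + B_j)) − 1, where both operators' prices coincide and the total revenue equals (B_i + B_j)·(ln(G/(B_i + B_j)) − 1). -/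
open Real

/-!
Write `c = ln(G/(B_i+B_j)) − 1` for the price at which `(B_i + B_j)·e^{1+c} = G`. For every
`p ≤ c` the residual demand `G − B_i·e^{1+p}` is at least `B_j·e^{1+p} > 0`, so the revenue is
smooth there and its derivative `B_i·(1 − B_j·e^{1+p}/(G − B_i·e^{1+p}))` is nonnegative. Hence
the revenue increases up to `c`, and at `c` the residual demand is exactly `B_j·e^{1+c}`, so the
market-clearing price of operator `j` is `c` as well.
-/

namespace CoordinatedDuopoly

open Set

noncomputable def totalRevenue (G Bi Bj p : ℝ) : ℝ :=
  Bi * p + Bj * (log ((G - Bi * exp (1 + p)) / Bj) - 1)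

lemma exp_one_add_log_sub_one {x : ℝ} (hx : 0 < x) : exp (1 + (log x - 1)) = x := by
  rw [add_sub_cancel, exp_log hx]

lemma mul_exp_one_add_le_iff {B G p : ℝ} (hB : 0 < B) (hG : 0 < G) :
    B * exp (1 + p) ≤ G ↔ p ≤ log (G / B) - 1 := by
  rw [← le_div_iff₀' hB]
  conv_lhs => rw [← exp_one_add_log_sub_one (div_pos hG hB)]
  rw [exp_le_exp, add_le_add_iff_left]

variable {G Bi Bj p : ℝ}

lemma mul_exp_le_residualDemand (hG : 0 < G) (hBi : 0 < Bi) (hBj : 0 < Bj)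
    (hp : p ≤ log (G / (Bi + Bj)) - 1) : Bj * exp (1 + p) ≤ G - Bi * exp (1 + p) := by
  have := (mul_exp_one_add_le_iff (add_pos hBi hBj) hG).mpr hp
  linarith

lemma residualDemand_pos (hG : 0 < G) (hBi : 0 < Bi) (hBj : 0 < Bj)
    (hp : p ≤ log (G / (Bi + Bj)) - 1) : 0 < G - Bi * exp (1 + p) :=
  (mul_pos hBj (exp_pos _)).trans_le (mul_exp_le_residualDemand hG hBi hBj hp)

lemma hasDerivAt_totalRevenue (hBj : Bj ≠ 0) (hp : 0 < G - Bi * exp (1 + p)) :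
    HasDerivAt (totalRevenue G Bi Bj)
      (Bi * (1 - Bj * exp (1 + p) / (G - Bi * exp (1 + p)))) p := by
  have hexp : HasDerivAt (fun p : ℝ => exp (1 + p)) (exp (1 + p)) p := by
    simpa using ((hasDerivAt_id p).const_add 1).exp
  have hlog := ((((hexp.const_mul Bi).const_sub G).div_const Bj).log
    (div_ne_zero hp.ne' hBj)).sub_const 1
  refine (((hasDerivAt_id p).const_mul Bi).add (hlog.const_mul Bj)).congr_deriv ?_
  field_simp
  ring

lemma totalRevenue_deriv_nonneg (hG : 0 < G) (hBi : 0 < Bi) (hBj : 0 < Bj)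
    (hp : p ≤ log (G / (Bi + Bj)) - 1) :
    0 ≤ Bi * (1 - Bj * exp (1 + p) / (G - Bi * exp (1 + p))) :=
  mul_nonneg hBi.le <| sub_nonneg.mpr <|
    (div_le_one (residualDemand_pos hG hBi hBj hp)).mpr (mul_exp_le_residualDemand hG hBi hBj hp)

lemma monotoneOn_totalRevenue (hG : 0 < G) (hBi : 0 < Bi) (hBj : 0 < Bj) :
    MonotoneOn (totalRevenue G Bi Bj) (Iic (log (G / (Bi + Bj)) - 1)) := by
  have hderiv : ∀ p ∈ Iic (log (G / (Bi + Bj)) - 1), HasDerivAt (totalRevenue G Bi Bj)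
      (Bi * (1 - Bj * exp (1 + p) / (G - Bi * exp (1 + p)))) p := fun p hp =>
    hasDerivAt_totalRevenue hBj.ne' (residualDemand_pos hG hBi hBj hp)
  refine monotoneOn_of_hasDerivWithinAt_nonneg (convex_Iic _)
    (fun p hp => (hderiv p hp).continuousAt.continuousWithinAt)
    (fun p hp => (hderiv p (interior_subset hp)).hasDerivWithinAt)
    (fun p hp => totalRevenue_deriv_nonneg hG hBi hBj (mem_Iic.mp (interior_subset hp)))

lemma clearingPrice_at_log_div_sub_one (hG : 0 < G) (hBi : 0 < Bi) (hBj : 0 < Bj) :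
    log ((G - Bi * exp (1 + (log (G / (Bi + Bj)) - 1))) / Bj) - 1 = log (G / (Bi + Bj)) - 1 := by
  have hB : 0 < Bi + Bj := add_pos hBi hBj
  have hresidual : G - Bi * (G / (Bi + Bj)) = Bj * (G / (Bi + Bj)) := by
    field_simp
    ring
  rw [exp_one_add_log_sub_one (div_pos hG hB), hresidual, mul_div_cancel_left₀ _ hBj.ne']

end CoordinatedDuopoly

open CoordinatedDuopoly in
theorem stmt_15_general (G Bi Bj : ℝ) (hG : 0 < G) (hBi : 0 < Bi) (hBj : 0 < Bj) :
    (∀ p ∈ Set.Icc (0 : ℝ) (log (G / (Bi + Bj)) - 1), 0 < G - Bi * exp (1 + p)) ∧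
    MonotoneOn (fun p : ℝ => Bi * p + Bj * (log ((G - Bi * exp (1 + p)) / Bj) - 1))
      (Set.Icc (0 : ℝ) (log (G / (Bi + Bj)) - 1)) ∧
    (∀ p ∈ Set.Icc (0 : ℝ) (log (G / (Bi + Bj)) - 1),
      deriv (fun p : ℝ => Bi * p + Bj * (log ((G - Bi * exp (1 + p)) / Bj) - 1)) p
        = Bi * (1 - Bj * exp (1 + p) / (G - Bi * exp (1 + p))) ∧
      0 ≤ Bi * (1 - Bj * exp (1 + p) / (G - Bi * exp (1 + p)))) ∧
    (∀ p ∈ Set.Icc (0 : ℝ) (log (G / (Bi + Bj)) - 1),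
      Bi * p + Bj * (log ((G - Bi * exp (1 + p)) / Bj) - 1) ≤
        Bi * (log (G / (Bi + Bj)) - 1) +
          Bj * (log ((G - Bi * exp (1 + (log (G / (Bi + Bj)) - 1))) / Bj) - 1)) ∧
    log ((G - Bi * exp (1 + (log (G / (Bi + Bj)) - 1))) / Bj) - 1
      = log (G / (Bi + Bj)) - 1 ∧
    Bi * (log (G / (Bi + Bj)) - 1) +
        Bj * (log ((G - Bi * exp (1 + (log (G / (Bi + Bj)) - 1))) / Bj) - 1)
      = (Bi + Bj) * (log (G / (Bi + Bj)) - 1) := by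
  have hmono := monotoneOn_totalRevenue hG hBi hBj
  have hprice := clearingPrice_at_log_div_sub_one hG hBi hBj
  refine ⟨fun p hp => residualDemand_pos hG hBi hBj hp.2,
    hmono.mono Set.Icc_subset_Iic_self,
    fun p hp => ⟨(hasDerivAt_totalRevenue hBj.ne' (residualDemand_pos hG hBi hBj hp.2)).deriv,
      totalRevenue_deriv_nonneg hG hBi hBj hp.2⟩,
    fun p hp => hmono hp.2 Set.self_mem_Iic hp.2, hprice, ?_⟩
  rw [hprice]
  ring

/-- Key step of Theorem 5 (coordinated pricing): with `Bi + Bj ≤ G·e^{−1}`, the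
coordinated total revenue `f(p) = Bi·p + Bj·(ln((G − Bi·e^{1+p})/Bj) − 1)` is well
defined and nondecreasing on `[0, ln(G/(Bi+Bj)) − 1]`, with nonnegative derivative
`Bi·(1 − Bj·e^{1+p}/(G − Bi·e^{1+p}))` there; it is maximized at the right endpoint
`p = ln(G/(Bi+Bj)) − 1`, where both operators' prices coincide and the total
revenue equals `(Bi+Bj)·(ln(G/(Bi+Bj)) − 1)`. -/
theorem stmt_15 (G Bi Bj : ℝ) (hG : 0 < G) (hBi : 0 < Bi) (hBj : 0 < Bj)
    (hsum : Bi + Bj ≤ G * exp (-1)) :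
    (∀ p ∈ Set.Icc (0 : ℝ) (log (G / (Bi + Bj)) - 1), 0 < G - Bi * exp (1 + p)) ∧
    MonotoneOn (fun p : ℝ => Bi * p + Bj * (log ((G - Bi * exp (1 + p)) / Bj) - 1))
      (Set.Icc (0 : ℝ) (log (G / (Bi + Bj)) - 1)) ∧
    (∀ p ∈ Set.Icc (0 : ℝ) (log (G / (Bi + Bj)) - 1),
      deriv (fun p : ℝ => Bi * p + Bj * (log ((G - Bi * exp (1 + p)) / Bj) - 1)) p
        = Bi * (1 - Bj * exp (1 + p) / (G - Bi * exp (1 + p))) ∧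
      0 ≤ Bi * (1 - Bj * exp (1 + p) / (G - Bi * exp (1 + p)))) ∧
    (∀ p ∈ Set.Icc (0 : ℝ) (log (G / (Bi + Bj)) - 1),
      Bi * p + Bj * (log ((G - Bi * exp (1 + p)) / Bj) - 1) ≤
        Bi * (log (G / (Bi + Bj)) - 1) +
          Bj * (log ((G - Bi * exp (1 + (log (G / (Bi + Bj)) - 1))) / Bj) - 1)) ∧
    log ((G - Bi * exp (1 + (log (G / (Bi + Bj)) - 1))) / Bj) - 1
      = log (G / (Bi + Bj)) - 1 ∧
    Bi * (log (G / (Bi + Bj)) - 1) +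
        Bj * (log ((G - Bi * exp (1 + (log (G / (Bi + Bj)) - 1))) / Bj) - 1)
      = (Bi + Bj) * (log (G / (Bi + Bj)) - 1) :=
  stmt_15_general G Bi Bj hG hBi hBj
end

section
/- (Operators' profit loss, low costs regime) Fix costs 0 ≤ C_i ≤ C_j with C_i + C_j ≤ 1. Then: (a) the minimum over ρ ∈ [C_j, 1 − C_i] of ρ·(1 − C_i) + (1 − ρ)·(1 − C_j) is attained at ρ = C_j and equals C_j·(1 − C_i) + (1 − C_j)²; and (b) the worst-case profit ratio satisfies (C_j·(1 − C_i) + (1 − C_j)²)·e^{C_i} ≥ 3/4. Hence in the low costs regime the total duopoly profit is at least 75% of the coordinated total profit. -/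
open Real

/-- Operators' profit loss, low costs regime (`0 ≤ Ci ≤ Cj`, `Ci + Cj ≤ 1`):
(a) the minimum over `ρ ∈ [Cj, 1 − Ci]` of `ρ·(1 − Ci) + (1 − ρ)·(1 − Cj)` is
attained at `ρ = Cj` and equals `Cj·(1 − Ci) + (1 − Cj)²`; and
(b) the worst-case profit ratio satisfies `(Cj·(1 − Ci) + (1 − Cj)²)·e^{Ci} ≥ 3/4`.
Hence the total duopoly profit is at least 75% of the coordinated total profit. -/
theorem stmt_17 (Ci Cj : ℝ) (hCi : 0 ≤ Ci) (hij : Ci ≤ Cj) (hsum : Ci + Cj ≤ 1) :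
    (∀ ρ ∈ Set.Icc Cj (1 - Ci),
      Cj * (1 - Ci) + (1 - Cj) ^ 2 ≤ ρ * (1 - Ci) + (1 - ρ) * (1 - Cj)) ∧
    Cj * (1 - Ci) + (1 - Cj) * (1 - Cj) = Cj * (1 - Ci) + (1 - Cj) ^ 2 ∧
    (3 : ℝ) / 4 ≤ (Cj * (1 - Ci) + (1 - Cj) ^ 2) * exp Ci := by
  refine ⟨fun ρ hρ => ?_, by ring, ?_⟩
  · obtain ⟨h1, h2⟩ := hρ
    nlinarith [mul_nonneg (sub_nonneg.2 h1) (sub_nonneg.2 hij)]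
  · have h1 : 1 + Ci + Ci ^ 2 / 2 ≤ exp Ci := Real.quadratic_le_exp_of_nonneg hCi
    have hbase : 0 ≤ Cj * (1 - Ci) + (1 - Cj) ^ 2 := by nlinarith
    have key : (3:ℝ)/4 ≤ (Cj * (1 - Ci) + (1 - Cj) ^ 2) * (1 + Ci + Ci ^ 2 / 2) := by
      nlinarith [sq_nonneg (Cj - 1/2), sq_nonneg Ci, sq_nonneg (Ci + Cj - 1), mul_nonneg hCi (sub_nonneg.2 hij), sq_nonneg (2*Cj - 1 + Ci), sq_nonneg (2*Cj - 1 - Ci), mul_nonneg (mul_nonneg hCi hCi) hCi, sq_nonneg (Ci*Cj)]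
    calc (3:ℝ)/4 ≤ (Cj * (1 - Ci) + (1 - Cj) ^ 2) * (1 + Ci + Ci ^ 2 / 2) := key
      _ ≤ _ := mul_le_mul_of_nonneg_left h1 hbase
end

section
/- (Operators' profit loss, high comparable costs regime) The function f(δ) = ((1 + δ²)/2)·e^{(1−δ)/2} on [0, 1] is strictly convex (indeed f''(δ) = e^{(1−δ)/2}·(δ² − 8δ + 9)/8 > 0 on [0, 1]); its unique minimizer on [0, 1] is δ* = 2 − √3, with minimum value f(δ*) = (4 − 2√3)·e^{(√3−1)/2}; and f(δ) ≥ 3/4 for all δ ∈ [0, 1]. -/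
/-!
The derivative of `f(δ) = ((1 + δ²)/2)·e^{(1−δ)/2}` is `e^{(1−δ)/2}·(4δ − 1 − δ²)/4`, and
`4δ − 1 − δ² = (δ − (2 − √3))·(2 + √3 − δ)`, so `f` decreases up to `2 − √3` and increases on
`[2 − √3, 2 + √3]`. At the minimizer `1 + (2 − √3)² = 2·(4 − 2√3)`, and the bound `3/4` follows from
`e^t ≥ 1 + t + t²/2` at `t = (√3 − 1)/2`.
-/

open Real Set

noncomputable def profitRatio (δ : ℝ) : ℝ := ((1 + δ ^ 2) / 2) * exp ((1 - δ) / 2)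

lemma continuous_profitRatio : Continuous profitRatio := by
  unfold profitRatio
  fun_prop

lemma hasDerivAt_exp_one_sub_div_two (x : ℝ) :
    HasDerivAt (fun δ : ℝ => exp ((1 - δ) / 2)) (exp ((1 - x) / 2) * (-1 / 2)) x :=
  (((hasDerivAt_id x).const_sub 1).div_const 2).exp

lemma hasDerivAt_profitRatio (x : ℝ) :
    HasDerivAt profitRatio (exp ((1 - x) / 2) * (4 * x - 1 - x ^ 2) / 4) x := by
  have hpoly : HasDerivAt (fun δ : ℝ => (1 + δ ^ 2) / 2) x x :=
    (((hasDerivAt_pow 2 x).const_add 1).div_const 2).congr_deriv (by ring)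
  exact (hpoly.mul (hasDerivAt_exp_one_sub_div_two x)).congr_deriv (by ring)

lemma deriv_profitRatio :
    deriv profitRatio = fun x => exp ((1 - x) / 2) * (4 * x - 1 - x ^ 2) / 4 :=
  funext fun x => (hasDerivAt_profitRatio x).deriv

lemma deriv_deriv_profitRatio (x : ℝ) :
    deriv (deriv profitRatio) x = exp ((1 - x) / 2) * (x ^ 2 - 8 * x + 9) / 8 := by
  have hpoly : HasDerivAt (fun δ : ℝ => 4 * δ - 1 - δ ^ 2) (4 - 2 * x) x :=
    ((((hasDerivAt_id x).const_mul 4).sub_const 1).sub (hasDerivAt_pow 2 x)).congr_deriv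
      (by simp)
  rw [deriv_profitRatio]
  exact (((hasDerivAt_exp_one_sub_div_two x).mul hpoly).div_const 4).congr_deriv (by ring) |>.deriv

lemma deriv_deriv_profitRatio_pos {x : ℝ} (hx : x ≤ 1) :
    0 < exp ((1 - x) / 2) * (x ^ 2 - 8 * x + 9) / 8 := by
  have hquad : 0 < x ^ 2 - 8 * x + 9 := by nlinarith
  positivity

lemma strictConvexOn_profitRatio : StrictConvexOn ℝ (Iic 1) profitRatio := by
  refine strictConvexOn_of_deriv2_pos (convex_Iic 1) continuous_profitRatio.continuousOn ?_
  intro x hx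
  rw [interior_Iic] at hx
  simpa only [Function.iterate_succ, Function.iterate_zero, Function.comp_apply, id_eq,
    deriv_deriv_profitRatio] using deriv_deriv_profitRatio_pos hx.le

lemma four_mul_sub_one_sub_sq (x : ℝ) :
    4 * x - 1 - x ^ 2 = (x - (2 - √3)) * (2 + √3 - x) := by
  have h3 : √3 ^ 2 = 3 := sq_sqrt (by norm_num)
  linear_combination -h3

lemma strictAntiOn_profitRatio : StrictAntiOn profitRatio (Iic (2 - √3)) := by
  refine strictAntiOn_of_deriv_neg (convex_Iic _) continuous_profitRatio.continuousOn ?_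
  intro x hx
  rw [interior_Iic] at hx
  have hneg : 4 * x - 1 - x ^ 2 < 0 := by
    rw [four_mul_sub_one_sub_sq]
    exact mul_neg_of_neg_of_pos (by linarith [hx.out]) (by linarith [hx.out, sqrt_nonneg 3])
  rw [deriv_profitRatio]
  exact div_neg_of_neg_of_pos (mul_neg_of_pos_of_neg (exp_pos _) hneg) four_pos

lemma strictMonoOn_profitRatio : StrictMonoOn profitRatio (Icc (2 - √3) (2 + √3)) := by
  refine strictMonoOn_of_deriv_pos (convex_Icc _ _) continuous_profitRatio.continuousOn ?_
  intro x hx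
  rw [interior_Icc] at hx
  have hpos : 0 < 4 * x - 1 - x ^ 2 := by
    rw [four_mul_sub_one_sub_sq]
    exact mul_pos (by linarith [hx.1]) (by linarith [hx.2])
  rw [deriv_profitRatio]
  positivity

lemma profitRatio_two_sub_sqrt_three_lt {δ : ℝ} (hδ : δ ≤ 2 + √3) (hne : δ ≠ 2 - √3) :
    profitRatio (2 - √3) < profitRatio δ := by
  rcases hne.lt_or_gt with hlt | hgt
  · exact strictAntiOn_profitRatio hlt.le self_mem_Iic hlt
  · exact strictMonoOn_profitRatio ⟨le_rfl, by linarith [sqrt_nonneg 3]⟩ ⟨hgt.le, hδ⟩ hgt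

lemma profitRatio_two_sub_sqrt_three :
    profitRatio (2 - √3) = (4 - 2 * √3) * exp ((√3 - 1) / 2) := by
  have h3 : √3 ^ 2 = 3 := sq_sqrt (by norm_num)
  unfold profitRatio
  congr 2
  · linear_combination h3 / 2
  · ring

lemma three_div_four_le_profitRatio_two_sub_sqrt_three :
    3 / 4 ≤ profitRatio (2 - √3) := by
  have h3 : √3 ^ 2 = 3 := sq_sqrt (by norm_num)
  have hlt : √3 < 2 := by nlinarith [sqrt_nonneg 3]
  have hgt : 1 < √3 := by nlinarith [sqrt_nonneg 3]
  have hexp := quadratic_le_exp_of_nonneg (x := (√3 - 1) / 2) (by linarith)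
  rw [profitRatio_two_sub_sqrt_three]
  nlinarith [mul_le_mul_of_nonneg_left hexp (by linarith : (0 : ℝ) ≤ 4 - 2 * √3)]

/-- Operators' profit loss, high comparable costs regime: the profit-ratio
function `f(δ) = ((1 + δ²)/2)·e^{(1−δ)/2}` is strictly convex on `[0,1]`
(with second derivative `e^{(1−δ)/2}·(δ² − 8δ + 9)/8 > 0` there), has unique
minimizer `δ* = 2 − √3` on `[0,1]` with minimum value `(4 − 2√3)·e^{(√3−1)/2}`,
and satisfies `f(δ) ≥ 3/4` on `[0,1]`. -/
theorem stmt_18 :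
    StrictConvexOn ℝ (Set.Icc (0 : ℝ) 1)
      (fun δ : ℝ => ((1 + δ ^ 2) / 2) * exp ((1 - δ) / 2)) ∧
    (∀ δ ∈ Set.Icc (0 : ℝ) 1,
      deriv (deriv (fun δ : ℝ => ((1 + δ ^ 2) / 2) * exp ((1 - δ) / 2))) δ
        = exp ((1 - δ) / 2) * (δ ^ 2 - 8 * δ + 9) / 8 ∧
      0 < exp ((1 - δ) / 2) * (δ ^ 2 - 8 * δ + 9) / 8) ∧
    (∀ δ ∈ Set.Icc (0 : ℝ) 1, δ ≠ 2 - Real.sqrt 3 →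
      ((1 + (2 - Real.sqrt 3) ^ 2) / 2) * exp ((1 - (2 - Real.sqrt 3)) / 2) <
        ((1 + δ ^ 2) / 2) * exp ((1 - δ) / 2)) ∧
    ((1 + (2 - Real.sqrt 3) ^ 2) / 2) * exp ((1 - (2 - Real.sqrt 3)) / 2)
      = (4 - 2 * Real.sqrt 3) * exp ((Real.sqrt 3 - 1) / 2) ∧
    (∀ δ ∈ Set.Icc (0 : ℝ) 1, (3 : ℝ) / 4 ≤ ((1 + δ ^ 2) / 2) * exp ((1 - δ) / 2)) := by
  have hle : ∀ δ ∈ Icc (0 : ℝ) 1, δ ≤ 2 + √3 := fun δ hδ => by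
    linarith [hδ.2, sqrt_nonneg 3]
  have hmin : ∀ δ ∈ Icc (0 : ℝ) 1, δ ≠ 2 - √3 → profitRatio (2 - √3) < profitRatio δ :=
    fun δ hδ => profitRatio_two_sub_sqrt_three_lt (hle δ hδ)
  refine ⟨strictConvexOn_profitRatio.subset Icc_subset_Iic_self (convex_Icc 0 1),
    fun δ hδ => ⟨deriv_deriv_profitRatio δ, deriv_deriv_profitRatio_pos hδ.2⟩, hmin,
    profitRatio_two_sub_sqrt_three, fun δ hδ => ?_⟩
  obtain rfl | hne := eq_or_ne δ (2 - √3)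
  · exact three_div_four_le_profitRatio_two_sub_sqrt_three
  · exact three_div_four_le_profitRatio_two_sub_sqrt_three.trans (hmin δ hδ hne).le
end
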